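/- arXiv:1105.0414 — 4 statements merged into one kernel-verified Lean document; each statement's English description precedes it below -/
import Mathlib

section
/- Let n ≥ 1, b ≥ 0, c ≥ 0 with b + c < n, μ > 0, λ ≥ 0, and t > 0. Then there exist constants C₁, C₂ > 0 (depending only on n, b, c, μ) such that C₁ · t^{-μ/2} · (|x| + λ + √t)^{-b} · (|x| + √t)^{-c} ≤ ∫_{ℝⁿ} (|x−y| + λ)^{-b} |x−y|^{-c} (|y| + √t)^{-n−μ} dy ≤ C₂ · t^{-μ/2} · (|x| + λ + √t)^{-b} · (|x| + √t)^{-c} for all x ∈ ℝⁿ. -/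
/-!
The substitution `x = √t x'`, `λ = √t λ'`, `y = √t y'` multiplies both sides by
`t ^ (-(b + c + μ) / 2)`, so it suffices to treat `t = 1`. On the unit ball `‖y‖ ≤ 1` the
integrand is at least `2 ^ (-n - μ) (‖x‖ + λ + 1) ^ (-b) (‖x‖ + 1) ^ (-c)`: this is the lower
bound. For the upper bound split at `‖x - y‖ = R := (‖x‖ + 1) / 2`. Near `x`, `‖y‖ + 1 ≥ R`
and `‖x - y‖ + λ ≥ (‖x - y‖ / R) (‖x‖ + λ + 1) / 2`, which leaves the singularity
`‖x - y‖ ^ (-(b + c))`: it is integrable since `b + c < n`, and its integral over `ball x R` is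
`R ^ (n - b - c)` times a constant. Away from `x` the first two factors are at most
`2 ^ (b + c) (‖x‖ + λ + 1) ^ (-b) (‖x‖ + 1) ^ (-c)`, and `(‖y‖ + 1) ^ (-n - μ)` is integrable.
-/

open MeasureTheory Real Metric Set Module Filter

noncomputable section

namespace WeightedConvolution

variable {E : Type*} [NormedAddCommGroup E]

def kernel (b c a lam τ : ℝ) (x y : E) : ℝ :=
  (‖x - y‖ + lam) ^ (-b) * ‖x - y‖ ^ (-c) * (‖y‖ + τ) ^ (-a)

def envelope (b c lam τ : ℝ) (x : E) : ℝ :=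
  (‖x‖ + lam + τ) ^ (-b) * (‖x‖ + τ) ^ (-c)

lemma kernel_nonneg {b c a lam τ : ℝ} (hlam : 0 ≤ lam) (hτ : 0 ≤ τ) (x y : E) :
    0 ≤ kernel b c a lam τ x y := by
  unfold kernel; positivity

lemma div_two_rpow_neg {x : ℝ} (hx : 0 ≤ x) (a : ℝ) : (x / 2) ^ (-a) = 2 ^ a * x ^ (-a) := by
  rw [div_rpow hx zero_le_two, rpow_neg zero_le_two, div_inv_eq_mul, mul_comm]

lemma rpow_neg_mul_half_rpow_mul_half_rpow_le {X a b c N : ℝ} (hX : 1 ≤ X) (hc : c ≤ N)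
    (hN : N ≤ a) : X ^ (-a) * (X / 2) ^ b * (X / 2) ^ (N - (b + c)) ≤ X ^ (-c) := by
  have hX0 : 0 < X := by linarith
  rw [mul_assoc, ← rpow_add (by positivity), show b + (N - (b + c)) = N - c by ring]
  calc X ^ (-a) * (X / 2) ^ (N - c) ≤ X ^ (-a) * X ^ (a - c) := by
        gcongr
        exact (rpow_le_rpow (by positivity) (half_le_self hX0.le) (by linarith)).trans
          (rpow_le_rpow_of_exponent_le hX (by linarith))
    _ = X ^ (-c) := by rw [← rpow_add hX0]; ring_nf

section Pointwise

variable {b c a lam : ℝ} {x z : E}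

lemma two_rpow_neg_mul_envelope_le_kernel (hb : 0 ≤ b) (hc : 0 ≤ c) (ha : 0 ≤ a)
    (hlam : 0 ≤ lam) (hzx : z ≠ x) (hz : ‖z‖ ≤ 1) :
    2 ^ (-a) * envelope b c lam 1 x ≤ kernel b c a lam 1 x z := by
  have hw : 0 < ‖x - z‖ := norm_pos_iff.2 (sub_ne_zero.2 hzx.symm)
  have hwx : ‖x - z‖ ≤ ‖x‖ + 1 := (norm_sub_le x z).trans (by linarith)
  have h₁ : (‖x‖ + lam + 1) ^ (-b) ≤ (‖x - z‖ + lam) ^ (-b) :=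
    rpow_le_rpow_of_nonpos (by positivity) (by linarith) (neg_nonpos.2 hb)
  have h₂ : (‖x‖ + 1) ^ (-c) ≤ ‖x - z‖ ^ (-c) := rpow_le_rpow_of_nonpos hw hwx (neg_nonpos.2 hc)
  have h₃ : (2 : ℝ) ^ (-a) ≤ (‖z‖ + 1) ^ (-a) :=
    rpow_le_rpow_of_nonpos (by positivity) (by linarith) (neg_nonpos.2 ha)
  rw [mul_comm]
  unfold envelope kernel
  gcongr ?_ * ?_ * ?_

lemma kernel_le_of_norm_sub_lt (hb : 0 ≤ b) (ha : 0 ≤ a) (hlam : 0 ≤ lam) (hzx : z ≠ x)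
    (hxz : ‖x - z‖ < (‖x‖ + 1) / 2) :
    kernel b c a lam 1 x z ≤ 2 ^ (a + b) * (‖x‖ + 1) ^ (-a) * (‖x‖ + lam + 1) ^ (-b)
      * ((‖x‖ + 1) / 2) ^ b * ‖x - z‖ ^ (-(b + c)) := by
  set R := (‖x‖ + 1) / 2 with hR_def
  set w := ‖x - z‖ with hw_def
  have hR : 0 < R := by positivity
  have hw : 0 < w := norm_pos_iff.2 (sub_ne_zero.2 hzx.symm)
  have hu : w / R ≤ 1 := (div_le_one hR).2 hxz.le
  have h₁ : w / R * ((‖x‖ + lam + 1) / 2) ≤ w + lam :=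
    calc w / R * ((‖x‖ + lam + 1) / 2) ≤ w / R * (R + lam) := by gcongr; linarith [hR_def]
      _ = w + w / R * lam := by field_simp
      _ ≤ w + lam := by gcongr; exact mul_le_of_le_one_left hlam hu
  have h₂ : (‖x‖ + 1) / 2 ≤ ‖z‖ + 1 := by
    linarith [norm_sub_norm_le x z, hR_def, hw_def]
  have hfirst : (w + lam) ^ (-b) ≤ R ^ b * w ^ (-b) * (2 ^ b * (‖x‖ + lam + 1) ^ (-b)) :=
    calc (w + lam) ^ (-b) ≤ (w / R * ((‖x‖ + lam + 1) / 2)) ^ (-b) :=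
          rpow_le_rpow_of_nonpos (by positivity) h₁ (neg_nonpos.2 hb)
      _ = R ^ b * w ^ (-b) * (2 ^ b * (‖x‖ + lam + 1) ^ (-b)) := by
          rw [mul_rpow (by positivity) (by positivity), div_two_rpow_neg (by positivity),
            div_rpow hw.le hR.le, rpow_neg hR.le, div_inv_eq_mul, mul_comm (w ^ (-b))]
  have hlast : (‖z‖ + 1) ^ (-a) ≤ 2 ^ a * (‖x‖ + 1) ^ (-a) :=
    (rpow_le_rpow_of_nonpos (by positivity) h₂ (neg_nonpos.2 ha)).trans_eq
      (div_two_rpow_neg (by positivity) a)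
  calc kernel b c a lam 1 x z = (w + lam) ^ (-b) * w ^ (-c) * (‖z‖ + 1) ^ (-a) := rfl
    _ ≤ R ^ b * w ^ (-b) * (2 ^ b * (‖x‖ + lam + 1) ^ (-b)) * w ^ (-c)
        * (2 ^ a * (‖x‖ + 1) ^ (-a)) := by gcongr
    _ = _ := by
      rw [neg_add, rpow_add hw, rpow_add zero_lt_two]
      ring

lemma kernel_le_of_le_norm_sub (hb : 0 ≤ b) (hc : 0 ≤ c) (hlam : 0 ≤ lam)
    (hxz : (‖x‖ + 1) / 2 ≤ ‖x - z‖) :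
    kernel b c a lam 1 x z ≤ 2 ^ (b + c) * envelope b c lam 1 x * (‖z‖ + 1) ^ (-a) := by
  have h₁ : (‖x - z‖ + lam) ^ (-b) ≤ 2 ^ b * (‖x‖ + lam + 1) ^ (-b) :=
    (rpow_le_rpow_of_nonpos (by positivity) (by linarith) (neg_nonpos.2 hb)).trans_eq
      (div_two_rpow_neg (by positivity) b)
  have h₂ : ‖x - z‖ ^ (-c) ≤ 2 ^ c * (‖x‖ + 1) ^ (-c) :=
    (rpow_le_rpow_of_nonpos (by positivity) hxz (neg_nonpos.2 hc)).trans_eq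
      (div_two_rpow_neg (by positivity) c)
  calc kernel b c a lam 1 x z
      ≤ 2 ^ b * (‖x‖ + lam + 1) ^ (-b) * (2 ^ c * (‖x‖ + 1) ^ (-c)) * (‖z‖ + 1) ^ (-a) := by
        unfold kernel; gcongr
    _ = _ := by
      unfold envelope
      rw [rpow_add zero_lt_two]
      ring

lemma kernel_le_majorant (hb : 0 ≤ b) (hc : 0 ≤ c) (ha : 0 ≤ a) (hlam : 0 ≤ lam) (hzx : z ≠ x) :
    kernel b c a lam 1 x z ≤
      2 ^ (a + b) * (‖x‖ + 1) ^ (-a) * (‖x‖ + lam + 1) ^ (-b) * ((‖x‖ + 1) / 2) ^ b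
          * (ball (0 : E) ((‖x‖ + 1) / 2)).indicator (fun w => ‖w‖ ^ (-(b + c))) (x - z)
        + 2 ^ (b + c) * envelope b c lam 1 x * (‖z‖ + 1) ^ (-a) := by
  have hfar : 0 ≤ 2 ^ (b + c) * envelope b c lam 1 x * (‖z‖ + 1) ^ (-a) := by
    unfold envelope; positivity
  by_cases hxz : ‖x - z‖ < (‖x‖ + 1) / 2
  · rw [indicator_of_mem (mem_ball_zero_iff.2 hxz)]
    exact le_add_of_le_of_nonneg (kernel_le_of_norm_sub_lt hb ha hlam hzx hxz) hfar
  · rw [indicator_of_notMem (fun h => hxz (mem_ball_zero_iff.1 h)), mul_zero, zero_add]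
    exact kernel_le_of_le_norm_sub hb hc hlam (not_lt.1 hxz)

end Pointwise

section Scaling

variable [NormedSpace ℝ E] {b c a lam τ : ℝ}

lemma kernel_smul (hlam : 0 ≤ lam) (hτ : 0 < τ) (x y : E) :
    kernel b c a (τ * lam) τ (τ • x) (τ • y) = τ ^ (-(b + c + a)) * kernel b c a lam 1 x y := by
  have hn : ∀ v : E, ‖τ • v‖ = τ * ‖v‖ := fun v => by rw [norm_smul, norm_of_nonneg hτ.le]
  unfold kernel
  rw [← smul_sub, hn, hn, ← mul_add, show τ * ‖y‖ + τ = τ * (‖y‖ + 1) by ring,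
    mul_rpow hτ.le (by positivity), mul_rpow hτ.le (norm_nonneg _), mul_rpow hτ.le (by positivity),
    neg_add, neg_add, rpow_add hτ, rpow_add hτ]
  ring

lemma envelope_smul (hlam : 0 ≤ lam) (hτ : 0 < τ) (x : E) :
    envelope b c (τ * lam) τ (τ • x) = τ ^ (-(b + c)) * envelope b c lam 1 x := by
  unfold envelope
  rw [norm_smul, norm_of_nonneg hτ.le, show τ * ‖x‖ + τ * lam + τ = τ * (‖x‖ + lam + 1) by ring,
    show τ * ‖x‖ + τ = τ * (‖x‖ + 1) by ring, mul_rpow hτ.le (by positivity),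
    mul_rpow hτ.le (by positivity), neg_add, rpow_add hτ]
  ring

end Scaling

lemma one_le_finrank_of_lt_finrank [NormedSpace ℝ E] {s : ℝ} (hs0 : 0 ≤ s)
    (hs : s < finrank ℝ E) : 1 ≤ finrank ℝ E := by
  have : (0 : ℝ) < finrank ℝ E := hs0.trans_lt hs
  exact_mod_cast this

section Integral

variable [NormedSpace ℝ E] [MeasurableSpace E] [BorelSpace E] [FiniteDimensional ℝ E]
  (μ : Measure E) [μ.IsAddHaarMeasure]

lemma integral_kernel_smul {b c a lam τ : ℝ} (hlam : 0 ≤ lam) (hτ : 0 < τ) (x : E) :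
    ∫ y, kernel b c a (τ * lam) τ (τ • x) y ∂μ
      = τ ^ ((finrank ℝ E : ℝ) - (b + c + a)) * ∫ y, kernel b c a lam 1 x y ∂μ := by
  have h := μ.integral_comp_smul_of_nonneg (kernel b c a (τ * lam) τ (τ • x)) τ (hR := hτ.le)
  simp_rw [kernel_smul hlam hτ, integral_const_mul, smul_eq_mul] at h
  rw [eq_inv_mul_iff_mul_eq₀ (by positivity)] at h
  rw [← h, ← mul_assoc, ← rpow_natCast, ← rpow_add hτ, sub_eq_add_neg]

lemma integrable_indicator_ball_norm_rpow_neg_sub {s : ℝ} (hs0 : 0 ≤ s) (hs : s < finrank ℝ E)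
    (R : ℝ) (x : E) :
    Integrable (fun z => (ball (0 : E) R).indicator (fun w => ‖w‖ ^ (-s)) (x - z)) μ := by
  have hball : IntegrableOn (fun w : E => ‖w‖ ^ (-s)) (ball 0 R) μ :=
    integrableOn_ball_of_norm_le_rpow (one_le_finrank_of_lt_finrank hs0 hs) hs (C := 1)
      (Eventually.of_forall fun w => by rw [one_mul, norm_of_nonneg (by positivity)])
      (by fun_prop : Measurable fun w : E => ‖w‖ ^ (-s)).aestronglyMeasurable
  exact ((integrable_indicator_iff measurableSet_ball).2 hball).comp_sub_left x

lemma integral_indicator_ball_norm_rpow_neg_sub {s R : ℝ} (hR : 0 < R) (x : E) :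
    ∫ z, (ball (0 : E) R).indicator (fun w => ‖w‖ ^ (-s)) (x - z) ∂μ
      = R ^ ((finrank ℝ E : ℝ) - s) * ∫ v in ball (0 : E) 1, ‖v‖ ^ (-s) ∂μ := by
  rw [integral_sub_left_eq_self (fun w => (ball (0 : E) R).indicator _ w) μ x,
    integral_indicator measurableSet_ball]
  have key := μ.setIntegral_comp_smul_of_pos (fun w : E => ‖w‖ ^ (-s)) (ball (0 : E) 1) hR
  simp_rw [smul_unitBall_of_pos hR, norm_smul, norm_of_nonneg hR.le,
    mul_rpow hR.le (norm_nonneg _), integral_const_mul, smul_eq_mul] at key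
  rw [eq_inv_mul_iff_mul_eq₀ (by positivity)] at key
  rw [← key, ← mul_assoc, ← rpow_natCast, ← rpow_add hR, sub_eq_add_neg]

lemma integrable_norm_add_one_rpow_neg {a : ℝ} (ha : (finrank ℝ E : ℝ) < a) :
    Integrable (fun z : E => (‖z‖ + 1) ^ (-a)) μ := by
  simpa only [add_comm] using integrable_one_add_norm (μ := μ) ha

lemma integral_norm_add_one_rpow_neg_pos {a : ℝ} (ha : (finrank ℝ E : ℝ) < a) :
    0 < ∫ z, (‖z‖ + 1) ^ (-a) ∂μ :=
  integral_pos_of_integrable_nonneg_nonzero (x := 0)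
    ((continuous_norm.add continuous_const).rpow_const fun z =>
      Or.inl (by positivity : ‖z‖ + 1 ≠ 0))
    (integrable_norm_add_one_rpow_neg μ ha) (fun z => rpow_nonneg (by positivity) _) (by simp)

lemma exists_integrable_kernel_and_integral_le {b c a : ℝ} (hb : 0 ≤ b) (hc : 0 ≤ c)
    (hbc : b + c < finrank ℝ E) (ha : (finrank ℝ E : ℝ) < a) :
    ∃ C, 0 < C ∧ ∀ lam, 0 ≤ lam → ∀ x : E, Integrable (kernel b c a lam 1 x) μ ∧
      ∫ z, kernel b c a lam 1 x z ∂μ ≤ C * envelope b c lam 1 x := by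
  have : Nontrivial E :=
    Module.nontrivial_of_finrank_pos (R := ℝ) (one_le_finrank_of_lt_finrank (by positivity) hbc)
  set K₀ := ∫ v in ball (0 : E) 1, ‖v‖ ^ (-(b + c)) ∂μ
  have hK₀ : 0 ≤ K₀ := setIntegral_nonneg measurableSet_ball fun v _ => by positivity
  set K₁ := ∫ z, (‖z‖ + 1) ^ (-a) ∂μ
  have hK₁ : 0 < K₁ := integral_norm_add_one_rpow_neg_pos μ ha
  refine ⟨2 ^ (a + b) * K₀ + 2 ^ (b + c) * K₁, by positivity, fun lam hlam x => ?_⟩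
  set X := ‖x‖ + 1
  set R := X / 2
  set A := 2 ^ (a + b) * X ^ (-a) * (‖x‖ + lam + 1) ^ (-b) * R ^ b with hA_def
  have hnear := integrable_indicator_ball_norm_rpow_neg_sub μ (add_nonneg hb hc) hbc R x
  have htail := integrable_norm_add_one_rpow_neg μ ha
  set Φ : E → ℝ := fun z => A * (ball (0 : E) R).indicator (fun w => ‖w‖ ^ (-(b + c))) (x - z)
    + 2 ^ (b + c) * envelope b c lam 1 x * (‖z‖ + 1) ^ (-a) with hΦ
  have hmaj : Integrable Φ μ :=
    (hnear.const_mul A).add (htail.const_mul (2 ^ (b + c) * envelope b c lam 1 x))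
  have hle : ∀ᵐ z ∂μ, kernel b c a lam 1 x z ≤ Φ z := by
    filter_upwards [μ.ae_ne x] with z hz
    exact kernel_le_majorant hb hc ((Nat.cast_nonneg _).trans ha.le) hlam hz
  have hint : Integrable (kernel b c a lam 1 x) μ :=
    hmaj.mono' (by unfold kernel; fun_prop) (hle.mono fun z hz =>
      (norm_of_nonneg (kernel_nonneg hlam zero_le_one x z)).trans_le hz)
  refine ⟨hint, (integral_mono_ae hint hmaj hle).trans ?_⟩
  rw [hΦ, integral_add (hnear.const_mul A) (htail.const_mul _), integral_const_mul,
    integral_const_mul, integral_indicator_ball_norm_rpow_neg_sub μ (by positivity) x]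
  have hA : A * R ^ ((finrank ℝ E : ℝ) - (b + c)) ≤ 2 ^ (a + b) * envelope b c lam 1 x :=
    calc A * R ^ ((finrank ℝ E : ℝ) - (b + c))
        = 2 ^ (a + b) * (‖x‖ + lam + 1) ^ (-b)
          * (X ^ (-a) * R ^ b * R ^ ((finrank ℝ E : ℝ) - (b + c))) := by
          rw [hA_def]; ring
      _ ≤ 2 ^ (a + b) * (‖x‖ + lam + 1) ^ (-b) * X ^ (-c) := by
          gcongr
          exact rpow_neg_mul_half_rpow_mul_half_rpow_le (by simp [X]) (by linarith) ha.le
      _ = 2 ^ (a + b) * envelope b c lam 1 x := by unfold envelope; ring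
  linarith [mul_le_mul_of_nonneg_right hA hK₀]

lemma measureReal_ball_mul_envelope_le_integral_kernel [Nontrivial E] {b c a lam : ℝ}
    (hb : 0 ≤ b) (hc : 0 ≤ c) (ha : 0 ≤ a) (hlam : 0 ≤ lam) (x : E)
    (hint : Integrable (kernel b c a lam 1 x) μ) :
    μ.real (ball 0 1) * 2 ^ (-a) * envelope b c lam 1 x ≤ ∫ z, kernel b c a lam 1 x z ∂μ := by
  have hlow : ∀ᵐ z ∂μ.restrict (ball (0 : E) 1),
      2 ^ (-a) * envelope b c lam 1 x ≤ kernel b c a lam 1 x z := by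
    filter_upwards [ae_restrict_of_ae (μ.ae_ne x), ae_restrict_mem measurableSet_ball] with z hzx hz
    exact two_rpow_neg_mul_envelope_le_kernel hb hc ha hlam hzx (mem_ball_zero_iff.1 hz).le
  calc μ.real (ball 0 1) * 2 ^ (-a) * envelope b c lam 1 x
      = ∫ _ in ball (0 : E) 1, 2 ^ (-a) * envelope b c lam 1 x ∂μ := by
        rw [setIntegral_const, smul_eq_mul, mul_assoc]
    _ ≤ ∫ z in ball (0 : E) 1, kernel b c a lam 1 x z ∂μ :=
        setIntegral_mono_ae_restrict (integrableOn_const measure_ball_lt_top.ne)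
          hint.integrableOn hlow
    _ ≤ ∫ z, kernel b c a lam 1 x z ∂μ :=
        setIntegral_le_integral hint (Eventually.of_forall (kernel_nonneg hlam zero_le_one x))

lemma exists_envelope_bounds_integral_kernel_one {b c a : ℝ} (hb : 0 ≤ b) (hc : 0 ≤ c)
    (hbc : b + c < finrank ℝ E) (ha : (finrank ℝ E : ℝ) < a) :
    ∃ C₁ C₂ : ℝ, 0 < C₁ ∧ 0 < C₂ ∧ ∀ lam, 0 ≤ lam → ∀ x : E,
      C₁ * envelope b c lam 1 x ≤ ∫ z, kernel b c a lam 1 x z ∂μ ∧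
      ∫ z, kernel b c a lam 1 x z ∂μ ≤ C₂ * envelope b c lam 1 x := by
  have : Nontrivial E :=
    Module.nontrivial_of_finrank_pos (R := ℝ) (one_le_finrank_of_lt_finrank (by positivity) hbc)
  obtain ⟨C₂, hC₂, h⟩ := exists_integrable_kernel_and_integral_le μ hb hc hbc ha
  have hball : 0 < μ.real (ball (0 : E) 1) :=
    ENNReal.toReal_pos (measure_ball_pos μ 0 one_pos).ne' measure_ball_lt_top.ne
  refine ⟨μ.real (ball 0 1) * 2 ^ (-a), C₂, by positivity, hC₂, fun lam hlam x => ?_⟩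
  obtain ⟨hint, hupper⟩ := h lam hlam x
  exact ⟨measureReal_ball_mul_envelope_le_integral_kernel μ hb hc
    ((Nat.cast_nonneg _).trans ha.le) hlam x hint, hupper⟩

theorem exists_envelope_bounds_integral_kernel {b c ν : ℝ} (hb : 0 ≤ b) (hc : 0 ≤ c)
    (hbc : b + c < finrank ℝ E) (hν : 0 < ν) :
    ∃ C₁ C₂ : ℝ, 0 < C₁ ∧ 0 < C₂ ∧ ∀ lam t : ℝ, 0 ≤ lam → 0 < t → ∀ x : E,
      C₁ * t ^ (-ν / 2) * envelope b c lam (√t) x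
          ≤ ∫ y, kernel b c (finrank ℝ E + ν) lam (√t) x y ∂μ ∧
        ∫ y, kernel b c (finrank ℝ E + ν) lam (√t) x y ∂μ
          ≤ C₂ * t ^ (-ν / 2) * envelope b c lam (√t) x := by
  obtain ⟨C₁, C₂, hC₁, hC₂, h⟩ :=
    exists_envelope_bounds_integral_kernel_one μ hb hc hbc (a := finrank ℝ E + ν) (by linarith)
  refine ⟨C₁, C₂, hC₁, hC₂, fun lam t hlam ht x => ?_⟩
  set τ := √t with hτ_def
  have hτ : 0 < τ := sqrt_pos.2 ht
  have hlam' : 0 ≤ lam / τ := by positivity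
  obtain ⟨hlo, hhi⟩ := h (lam / τ) hlam' (τ⁻¹ • x)
  have hI := integral_kernel_smul μ (b := b) (c := c) (a := finrank ℝ E + ν) hlam' hτ (τ⁻¹ • x)
  have hE := envelope_smul (b := b) (c := c) hlam' hτ (τ⁻¹ • x)
  rw [smul_inv_smul₀ hτ.ne', mul_div_cancel₀ lam hτ.ne'] at hI hE
  have ht' : t ^ (-ν / 2) = τ ^ (-ν) := by
    rw [hτ_def, sqrt_eq_rpow, ← rpow_mul ht.le]; ring_nf
  have hexp : τ ^ ((finrank ℝ E : ℝ) - (b + c + (finrank ℝ E + ν)))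
      = τ ^ (-ν) * τ ^ (-(b + c)) := by
    rw [← rpow_add hτ]; ring_nf
  have hpos : 0 ≤ τ ^ (-ν) * τ ^ (-(b + c)) := by positivity
  rw [hI, hE, ht', hexp]
  exact ⟨by linarith [mul_le_mul_of_nonneg_left hlo hpos],
    by linarith [mul_le_mul_of_nonneg_left hhi hpos]⟩

end Integral

end WeightedConvolution

end

theorem stmt0_general (n : ℕ) (b c μ : ℝ) (hb : 0 ≤ b) (hc : 0 ≤ c)
    (hbc : b + c < n) (hμ : 0 < μ) :
    ∃ C₁ C₂ : ℝ, 0 < C₁ ∧ 0 < C₂ ∧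
      ∀ (lam t : ℝ), 0 ≤ lam → 0 < t →
        ∀ x : EuclideanSpace ℝ (Fin n),
          (C₁ * t ^ (-μ / 2) * (‖x‖ + lam + Real.sqrt t) ^ (-b) * (‖x‖ + Real.sqrt t) ^ (-c)
            ≤ ∫ y : EuclideanSpace ℝ (Fin n),
                (‖x - y‖ + lam) ^ (-b) * ‖x - y‖ ^ (-c) * (‖y‖ + Real.sqrt t) ^ (-(n : ℝ) - μ)) ∧
          (∫ y : EuclideanSpace ℝ (Fin n),
                (‖x - y‖ + lam) ^ (-b) * ‖x - y‖ ^ (-c) * (‖y‖ + Real.sqrt t) ^ (-(n : ℝ) - μ))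
            ≤ C₂ * t ^ (-μ / 2) * (‖x‖ + lam + Real.sqrt t) ^ (-b) * (‖x‖ + Real.sqrt t) ^ (-c) := by
  have hN : (finrank ℝ (EuclideanSpace ℝ (Fin n)) : ℝ) = n := by simp
  obtain ⟨C₁, C₂, hC₁, hC₂, h⟩ := WeightedConvolution.exists_envelope_bounds_integral_kernel
    (volume : Measure (EuclideanSpace ℝ (Fin n))) hb hc (by rwa [hN]) hμ
  refine ⟨C₁, C₂, hC₁, hC₂, fun lam t hlam ht x => ?_⟩
  simpa only [WeightedConvolution.kernel, WeightedConvolution.envelope, hN, neg_add', mul_assoc]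
    using h lam t hlam ht x

theorem stmt0 (n : ℕ) (hn : 1 ≤ n) (b c μ : ℝ) (hb : 0 ≤ b) (hc : 0 ≤ c)
    (hbc : b + c < n) (hμ : 0 < μ) :
    ∃ C₁ C₂ : ℝ, 0 < C₁ ∧ 0 < C₂ ∧
      ∀ (lam t : ℝ), 0 ≤ lam → 0 < t →
        ∀ x : EuclideanSpace ℝ (Fin n),
          (C₁ * t ^ (-μ / 2) * (‖x‖ + lam + Real.sqrt t) ^ (-b) * (‖x‖ + Real.sqrt t) ^ (-c)
            ≤ ∫ y : EuclideanSpace ℝ (Fin n),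
                (‖x - y‖ + lam) ^ (-b) * ‖x - y‖ ^ (-c) * (‖y‖ + Real.sqrt t) ^ (-(n : ℝ) - μ)) ∧
          (∫ y : EuclideanSpace ℝ (Fin n),
                (‖x - y‖ + lam) ^ (-b) * ‖x - y‖ ^ (-c) * (‖y‖ + Real.sqrt t) ^ (-(n : ℝ) - μ))
            ≤ C₂ * t ^ (-μ / 2) * (‖x‖ + lam + Real.sqrt t) ^ (-b) * (‖x‖ + Real.sqrt t) ^ (-c) :=
  stmt0_general n b c μ hb hc hbc hμ
end

section
/- Let f : ℝ → ℝ be measurable with |f(x)| ≤ M⟨x⟩^{-a} for some a > 1, where ⟨x⟩ = √(1+x²). Then for any R > 0 there exist functions f₀ and F on ℝ such that f = f₀ + F′ (distributionally), supp f₀ ⊆ [−R, R], and |F(x)| ≤ C M ⟨x⟩^{-a+1} for a constant C = C(a, R). -/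
open MeasureTheory Real

namespace Stmt5Aux

open Set

noncomputable def w (a x : ℝ) : ℝ := Real.sqrt (1 + x ^ 2) ^ (-a)

lemma w_eq (a x : ℝ) : w a x = (1 + x ^ 2) ^ (-a / 2) := by
  rw [w, Real.sqrt_eq_rpow, ← Real.rpow_mul (by positivity)]
  norm_num
  ring_nf

lemma w_pos (a x : ℝ) : 0 < w a x := by
  rw [w_eq]; positivity

lemma w_int {a : ℝ} (ha : 1 < a) : Integrable (w a) := by
  have h := integrable_rpow_neg_one_add_norm_sq (E := ℝ) (μ := volume) (r := a)
    (by simpa using ha)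
  refine h.congr (Filter.Eventually.of_forall fun x => ?_)
  rw [w_eq]
  simp [Real.norm_eq_abs, sq_abs]

lemma w_even (a x : ℝ) : w a (-x) = w a x := by simp [w, neg_sq]

lemma w_tail {a : ℝ} (ha : 1 < a) {x : ℝ} (hx : 1 ≤ x) :
    ∫ t in Ioi x, w a t ≤ (Real.sqrt 2 ^ (a - 1) / (a - 1)) * Real.sqrt (1 + x ^ 2) ^ (-a + 1) := by
  have hx0 : (0:ℝ) < x := lt_of_lt_of_le one_pos hx
  have h1 : ∫ t in Ioi x, w a t ≤ ∫ t in Ioi x, t ^ (-a) := by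
    refine setIntegral_mono_on ((w_int ha).integrableOn)
      (integrableOn_Ioi_rpow_of_lt (by linarith) hx0) measurableSet_Ioi ?_
    intro t ht
    have ht0 : 0 < t := hx0.trans ht
    rw [w]
    refine Real.rpow_le_rpow_of_nonpos ht0 ?_ (by linarith)
    calc t = Real.sqrt (t ^ 2) := (Real.sqrt_sq ht0.le).symm
      _ ≤ Real.sqrt (1 + t ^ 2) := Real.sqrt_le_sqrt (by linarith)
  have h2 : ∫ t in Ioi x, t ^ (-a) = x ^ (-a + 1) / (a - 1) := by
    rw [integral_Ioi_rpow_of_lt (by linarith) hx0]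
    rw [div_eq_div_iff (by linarith) (by linarith)]
    ring
  have h3 : x ^ (-a + 1) ≤ Real.sqrt 2 ^ (a - 1) * Real.sqrt (1 + x ^ 2) ^ (-a + 1) := by
    have hs : Real.sqrt (1 + x ^ 2) ≤ Real.sqrt 2 * x := by
      calc Real.sqrt (1 + x ^ 2) ≤ Real.sqrt (2 * x ^ 2) := Real.sqrt_le_sqrt (by nlinarith)
        _ = Real.sqrt 2 * x := by
            rw [Real.sqrt_mul (by norm_num), Real.sqrt_sq hx0.le]
    have hb : (0:ℝ) < Real.sqrt (1 + x ^ 2) := Real.sqrt_pos.2 (by positivity)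
    have h4 : (Real.sqrt 2 * x) ^ (-a + 1) ≤ Real.sqrt (1 + x ^ 2) ^ (-a + 1) :=
      Real.rpow_le_rpow_of_nonpos hb hs (by linarith)
    have h5 : (Real.sqrt 2 * x) ^ (-a + 1)
        = Real.sqrt 2 ^ (-a + 1) * x ^ (-a + 1) :=
      Real.mul_rpow (Real.sqrt_nonneg 2) hx0.le
    have h6 : Real.sqrt 2 ^ (a - 1) * Real.sqrt 2 ^ (-a + 1) = 1 := by
      rw [← Real.rpow_add (by positivity)]
      norm_num
    calc x ^ (-a + 1) = Real.sqrt 2 ^ (a - 1) * Real.sqrt 2 ^ (-a + 1) * x ^ (-a + 1) := by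
          rw [h6, one_mul]
      _ = Real.sqrt 2 ^ (a - 1) * (Real.sqrt 2 * x) ^ (-a + 1) := by rw [h5]; ring
      _ ≤ Real.sqrt 2 ^ (a - 1) * Real.sqrt (1 + x ^ 2) ^ (-a + 1) :=
          mul_le_mul_of_nonneg_left h4 (by positivity)
  calc ∫ t in Ioi x, w a t ≤ x ^ (-a + 1) / (a - 1) := h1.trans_eq h2
    _ ≤ (Real.sqrt 2 ^ (a - 1) / (a - 1)) * Real.sqrt (1 + x ^ 2) ^ (-a + 1) := by
        rw [div_mul_eq_mul_div]
        exact div_le_div_of_nonneg_right h3 (by linarith)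

lemma w_tail_left {a : ℝ} (ha : 1 < a) {x : ℝ} (hx : x ≤ -1) :
    ∫ t in Iic x, w a t ≤ (Real.sqrt 2 ^ (a - 1) / (a - 1)) * Real.sqrt (1 + x ^ 2) ^ (-a + 1) := by
  have h1 : ∫ t in Iic x, w a t = ∫ t in Ioi (-x), w a t := by
    rw [← integral_comp_neg_Iic x (w a)]
    simp only [w_even]
  rw [h1]
  have := w_tail ha (x := -x) (by linarith)
  simpa [neg_sq] using this

/-- The integration-by-parts / Fubini step. -/
lemma ibp (h : ℝ → ℝ) (hh_int : Integrable h)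
    (F : ℝ → ℝ) (hF : F = fun x => ∫ t in Iic x, h t)
    (φ : ℝ → ℝ) (hφ : ContDiff ℝ (⊤ : ℕ∞) φ) (hφs : HasCompactSupport φ) :
    ∫ x, F x * deriv φ x = -∫ t, h t * φ t := by
  have hφ'c : Continuous (deriv φ) := hφ.continuous_deriv (by simp)
  have hφ'int : Integrable (deriv φ) := hφ'c.integrable_of_hasCompactSupport hφs.deriv
  set S : Set (ℝ × ℝ) := {q : ℝ × ℝ | q.2 ≤ q.1} with hS
  have hSm : MeasurableSet S := measurableSet_le measurable_snd measurable_fst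
  set G : ℝ × ℝ → ℝ := S.indicator (fun q => h q.2 * deriv φ q.1) with hG
  have hG_int : Integrable G (volume.prod volume) := by
    refine Integrable.indicator ?_ hSm
    have h1 := hφ'int.mul_prod hh_int
    exact h1.congr (Filter.Eventually.of_forall fun z => mul_comm _ _)
  have l1 : ∀ x, F x * deriv φ x = ∫ t, G (x, t) := by
    intro x
    rw [hF]
    rw [← integral_mul_const, ← integral_indicator (measurableSet_Iic (a := x))]
    refine integral_congr_ae (Filter.Eventually.of_forall fun t => ?_)
    by_cases ht : t ≤ x <;> simp [hG, hS, Set.indicator_apply, ht]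
  have l2 : ∀ t, ∫ x, G (x, t) = h t * (-φ t) := by
    intro t
    have e1 : ∀ x, G (x, t) = (Ici t).indicator (fun x => h t * deriv φ x) x := by
      intro x; by_cases hx : t ≤ x <;> simp [hG, hS, Set.indicator_apply, hx]
    calc ∫ x, G (x, t) = ∫ x in Ici t, h t * deriv φ x := by
          rw [← integral_indicator measurableSet_Ici]
          exact integral_congr_ae (Filter.Eventually.of_forall e1)
      _ = h t * ∫ x in Ici t, deriv φ x := integral_const_mul _ _
      _ = h t * ∫ x in Ioi t, deriv φ x := by rw [integral_Ici_eq_integral_Ioi]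
      _ = h t * (-φ t) := by rw [HasCompactSupport.integral_Ioi_deriv_eq (hφ.of_le (by simp)) hφs t]
  calc ∫ x, F x * deriv φ x = ∫ x, ∫ t, G (x, t) :=
        integral_congr_ae (Filter.Eventually.of_forall l1)
    _ = ∫ t, ∫ x, G (x, t) := integral_integral_swap hG_int
    _ = ∫ t, h t * (-φ t) := integral_congr_ae (Filter.Eventually.of_forall l2)
    _ = -∫ t, h t * φ t := by simp [mul_neg, integral_neg]

end Stmt5Aux

open Stmt5Aux Set

theorem stmt5 (a : ℝ) (ha : 1 < a) (R : ℝ) (hR : 0 < R) :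
    ∃ C : ℝ, 0 < C ∧
      ∀ (f : ℝ → ℝ) (M : ℝ), Measurable f →
        (∀ x : ℝ, |f x| ≤ M * Real.sqrt (1 + x ^ 2) ^ (-a)) →
        ∃ f₀ F : ℝ → ℝ,
          (∀ x : ℝ, x ∉ Set.Icc (-R) R → f₀ x = 0) ∧
          (∀ φ : ℝ → ℝ, ContDiff ℝ (⊤ : ℕ∞) φ → HasCompactSupport φ →
            ∫ x : ℝ, f x * φ x = (∫ x : ℝ, f₀ x * φ x) - ∫ x : ℝ, F x * deriv φ x) ∧
          (∀ x : ℝ, |F x| ≤ C * M * Real.sqrt (1 + x ^ 2) ^ (-a + 1)) := by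
  have hwint := w_int ha
  set I : ℝ := ∫ x, w a x with hIdef
  have hI : 0 ≤ I := integral_nonneg fun x => (w_pos a x).le
  set K : ℝ := max R 1 with hK
  have hK1 : (1:ℝ) ≤ K := le_max_right R 1
  have hKR : R ≤ K := le_max_left R 1
  set m : ℝ := Real.sqrt (1 + K ^ 2) ^ (-a + 1) with hm
  have hm0 : 0 < m := Real.rpow_pos_of_pos (Real.sqrt_pos.2 (by positivity)) _
  set c₁ : ℝ := Real.sqrt 2 ^ (a - 1) / (a - 1) with hc₁
  have hc₁0 : 0 < c₁ := div_pos (Real.rpow_pos_of_pos (by positivity) _) (by linarith)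
  set C : ℝ := 4 * I / m + c₁ + 1 with hCdef
  have hC0 : 0 < C := by
    have h4 : 0 ≤ 4 * I / m := div_nonneg (by linarith) hm0.le
    rw [hCdef]; linarith
  refine ⟨C, hC0, ?_⟩
  intro f M hfm hfb
  have hfb' : ∀ x, |f x| ≤ M * w a x := hfb
  have hM : 0 ≤ M := by
    have h0 := hfb' 0
    have hw0 := w_pos a 0
    nlinarith [abs_nonneg (f 0)]
  have hf_int : Integrable f := by
    refine (hwint.const_mul M).mono' hfm.aestronglyMeasurable ?_
    exact Filter.Eventually.of_forall fun x => by simpa [Real.norm_eq_abs] using hfb' x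
  have hfabs : ∫ x, |f x| ≤ M * I := by
    calc ∫ x, |f x| ≤ ∫ x, M * w a x := integral_mono hf_int.abs (hwint.const_mul M) hfb'
      _ = M * I := integral_const_mul M _
  -- the compactly supported part
  set c : ℝ := (∫ t, f t) - ∫ t in Icc (-R) R, f t with hc
  set f₀ : ℝ → ℝ := (Icc (-R) R).indicator (fun t => f t + c / (2 * R)) with hf₀
  have hf₀_zero : ∀ x ∉ Icc (-R) R, f₀ x = 0 := fun x hx => indicator_of_notMem hx _
  have hf₀_meas : Measurable f₀ := (hfm.add measurable_const).indicator measurableSet_Icc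
  have hf₀_int : Integrable f₀ := by
    rw [hf₀, integrable_indicator_iff measurableSet_Icc]
    exact hf_int.integrableOn.add (integrableOn_const measure_Icc_lt_top.ne enorm_ne_top)
  have hf₀_integral : ∫ t, f₀ t = (∫ t in Icc (-R) R, f t) + c := by
    rw [hf₀, integral_indicator measurableSet_Icc,
      integral_add hf_int.integrableOn (integrableOn_const measure_Icc_lt_top.ne enorm_ne_top),
      setIntegral_const, measureReal_def, Real.volume_Icc, smul_eq_mul]
    have e2 : (R - -R) = 2 * R := by ring
    rw [e2, ENNReal.toReal_ofReal (by linarith)]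
    field_simp
  set h : ℝ → ℝ := fun t => f t - f₀ t with hh
  have hh_int : Integrable h := hf_int.sub hf₀_int
  have h_eq_tail : ∀ t ∉ Icc (-R) R, h t = f t := by
    intro t ht; rw [hh]; simp [hf₀_zero t ht]
  have h_total : ∫ t, h t = 0 := by
    rw [hh, integral_sub hf_int hf₀_int, hf₀_integral, hc]; ring
  -- bound on c
  have habs1 : |∫ t, f t| ≤ M * I :=
    le_trans (by simpa [Real.norm_eq_abs] using norm_integral_le_integral_norm (μ := volume) f)
      hfabs
  have habs2 : |∫ t in Icc (-R) R, f t| ≤ M * I := by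
    refine le_trans (by simpa [Real.norm_eq_abs] using
      norm_integral_le_integral_norm (μ := volume.restrict (Icc (-R) R)) f) ?_
    refine le_trans (setIntegral_le_integral hf_int.abs
      (Filter.Eventually.of_forall fun t => abs_nonneg _)) hfabs
  have hcabs : |c| ≤ 2 * M * I := by
    rw [hc]
    calc |(∫ t, f t) - ∫ t in Icc (-R) R, f t|
        ≤ |∫ t, f t| + |∫ t in Icc (-R) R, f t| := abs_sub _ _
      _ ≤ 2 * M * I := by linarith
  -- L¹ bound on h
  have hJ : ∫ x, |h x| ≤ 4 * M * I := by
    have h1 : ∫ x, |f₀ x| ≤ M * I + |c| := by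
      have e : (fun x => |f₀ x|) = (Icc (-R) R).indicator (fun t => |f t + c / (2 * R)|) := by
        funext x
        rw [hf₀]
        by_cases hx : x ∈ Icc (-R) R <;> simp [Set.indicator_apply, hx]
      rw [e, integral_indicator measurableSet_Icc]
      have h2 : ∫ t in Icc (-R) R, |f t + c / (2 * R)|
          ≤ ∫ t in Icc (-R) R, (|f t| + |c| / (2 * R)) := by
        refine setIntegral_mono_on ?_ ?_ measurableSet_Icc ?_
        · exact (hf_int.integrableOn.add (integrableOn_const measure_Icc_lt_top.ne enorm_ne_top)).abs
        · exact hf_int.abs.integrableOn.add (integrableOn_const measure_Icc_lt_top.ne enorm_ne_top)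
        · intro t _
          have e3 : |c / (2*R)| = |c| / (2*R) := by
            rw [abs_div, abs_of_pos (by linarith : (0:ℝ) < 2*R)]
          calc |f t + c / (2*R)| ≤ |f t| + |c / (2*R)| := abs_add_le _ _
            _ = |f t| + |c| / (2*R) := by rw [e3]
      have h3 : ∫ t in Icc (-R) R, (|f t| + |c| / (2 * R))
          = (∫ t in Icc (-R) R, |f t|) + |c| := by
        rw [integral_add hf_int.abs.integrableOn
          (integrableOn_const measure_Icc_lt_top.ne enorm_ne_top),
          setIntegral_const, measureReal_def, Real.volume_Icc, smul_eq_mul]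
        have e2 : (R - -R) = 2 * R := by ring
        rw [e2, ENNReal.toReal_ofReal (by linarith)]
        field_simp
      have h4 : ∫ t in Icc (-R) R, |f t| ≤ ∫ t, |f t| :=
        setIntegral_le_integral hf_int.abs (Filter.Eventually.of_forall fun t => abs_nonneg _)
      linarith
    have h5 : ∫ x, |h x| ≤ ∫ x, (|f x| + |f₀ x|) := by
      refine integral_mono hh_int.abs (hf_int.abs.add hf₀_int.abs) ?_
      intro x; rw [hh]; exact abs_sub _ _
    rw [integral_add hf_int.abs hf₀_int.abs] at h5
    linarith
  -- the antiderivative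
  set F : ℝ → ℝ := fun x => ∫ t in Iic x, h t with hF
  refine ⟨f₀, F, hf₀_zero, ?_, ?_⟩
  · -- distributional identity
    intro φ hφ hφs
    have hφc : Continuous φ := hφ.continuous
    have hφbdd : ∃ B, ∀ x, ‖φ x‖ ≤ B := hφc.bounded_above_of_compact_support hφs
    have int_f₀φ : Integrable (fun x => f₀ x * φ x) := by
      have := Integrable.bdd_mul hf₀_int hφc.aestronglyMeasurable (Filter.Eventually.of_forall hφbdd.choose_spec)
      exact this.congr (Filter.Eventually.of_forall fun x => mul_comm _ _)
    have int_hφ : Integrable (fun x => h x * φ x) := by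
      have := Integrable.bdd_mul hh_int hφc.aestronglyMeasurable (Filter.Eventually.of_forall hφbdd.choose_spec)
      exact this.congr (Filter.Eventually.of_forall fun x => mul_comm _ _)
    have split : ∫ x, f x * φ x = (∫ x, f₀ x * φ x) + ∫ x, h x * φ x := by
      rw [← integral_add int_f₀φ int_hφ]
      refine integral_congr_ae (Filter.Eventually.of_forall fun x => ?_)
      rw [hh]; ring
    have hibp := ibp h hh_int F hF φ hφ hφs
    rw [split, hibp]
    ring
  · -- the decay bound
    intro x
    have hvx : 0 < Real.sqrt (1 + x ^ 2) ^ (-a + 1) :=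
      Real.rpow_pos_of_pos (Real.sqrt_pos.2 (by positivity)) _
    have hF_Ioi : F x = -∫ t in Ioi x, h t := by
      have := intervalIntegral.integral_Iic_add_Ioi (f := h) (μ := volume) (b := x)
        hh_int.integrableOn hh_int.integrableOn
      rw [h_total] at this
      rw [hF]; linarith
    have key : ∀ s : Set ℝ, MeasurableSet s → |∫ t in s, f t| ≤ M * ∫ t in s, w a t := by
      intro s hs
      calc |∫ t in s, f t| ≤ ∫ t in s, |f t| := by
            simpa [Real.norm_eq_abs] using
              norm_integral_le_integral_norm (μ := volume.restrict s) f
        _ ≤ ∫ t in s, M * w a t :=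
            setIntegral_mono_on hf_int.abs.integrableOn
              ((hwint.const_mul M).integrableOn) hs (fun t _ => hfb' t)
        _ = M * ∫ t in s, w a t := integral_const_mul M _
    rcases lt_or_ge x (-K) with hx | hx
    · -- left tail
      have h1 : F x = ∫ t in Iic x, f t := by
        rw [hF]
        refine setIntegral_congr_fun measurableSet_Iic (fun t ht => ?_)
        refine h_eq_tail t (fun hmem => ?_)
        have h2 : -R ≤ t := hmem.1
        have h3 : t ≤ x := ht
        linarith [hx, hKR]
      rw [h1]
      calc |∫ t in Iic x, f t| ≤ M * ∫ t in Iic x, w a t := key _ measurableSet_Iic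
        _ ≤ M * (c₁ * Real.sqrt (1 + x ^ 2) ^ (-a + 1)) :=
            mul_le_mul_of_nonneg_left (w_tail_left ha (by linarith)) hM
        _ = c₁ * (M * Real.sqrt (1 + x ^ 2) ^ (-a + 1)) := by ring
        _ ≤ C * (M * Real.sqrt (1 + x ^ 2) ^ (-a + 1)) := by
            refine mul_le_mul_of_nonneg_right ?_ (mul_nonneg hM hvx.le)
            have h4 : 0 ≤ 4 * I / m := div_nonneg (by linarith) hm0.le
            rw [hCdef]; linarith
        _ = C * M * Real.sqrt (1 + x ^ 2) ^ (-a + 1) := by ring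
    · rcases lt_or_ge K x with hx2 | hx2
      · -- right tail
        have h1 : F x = -∫ t in Ioi x, f t := by
          rw [hF_Ioi]
          congr 1
          refine setIntegral_congr_fun measurableSet_Ioi (fun t ht => ?_)
          refine h_eq_tail t (fun hmem => ?_)
          have h2 : t ≤ R := hmem.2
          have h3 : x < t := ht
          linarith [hx2, hKR]
        rw [h1, abs_neg]
        calc |∫ t in Ioi x, f t| ≤ M * ∫ t in Ioi x, w a t := key _ measurableSet_Ioi
          _ ≤ M * (c₁ * Real.sqrt (1 + x ^ 2) ^ (-a + 1)) :=
              mul_le_mul_of_nonneg_left (w_tail ha (by linarith)) hM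
          _ = c₁ * (M * Real.sqrt (1 + x ^ 2) ^ (-a + 1)) := by ring
          _ ≤ C * (M * Real.sqrt (1 + x ^ 2) ^ (-a + 1)) := by
              refine mul_le_mul_of_nonneg_right ?_ (mul_nonneg hM hvx.le)
              have h4 : 0 ≤ 4 * I / m := div_nonneg (by linarith) hm0.le
              rw [hCdef]; linarith
          _ = C * M * Real.sqrt (1 + x ^ 2) ^ (-a + 1) := by ring
      · -- middle
        have hvm : m ≤ Real.sqrt (1 + x ^ 2) ^ (-a + 1) := by
          rw [hm]
          refine Real.rpow_le_rpow_of_nonpos (Real.sqrt_pos.2 (by positivity)) ?_ (by linarith)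
          refine Real.sqrt_le_sqrt ?_
          have hxsq : x ^ 2 ≤ K ^ 2 := by nlinarith
          linarith
        have h1 : |F x| ≤ ∫ t, |h t| := by
          rw [hF]
          calc |∫ t in Iic x, h t| ≤ ∫ t in Iic x, |h t| := by
                simpa [Real.norm_eq_abs] using
                  norm_integral_le_integral_norm (μ := volume.restrict (Iic x)) h
            _ ≤ ∫ t, |h t| := setIntegral_le_integral hh_int.abs
                (Filter.Eventually.of_forall fun t => abs_nonneg _)
        have h2 : |F x| ≤ 4 * M * I := le_trans h1 hJ
        have h3 : 4 * M * I ≤ (4 * I / m) * M * Real.sqrt (1 + x ^ 2) ^ (-a + 1) := by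
          have e : (4 * I / m) * M * m = 4 * M * I := by field_simp
          calc 4 * M * I = (4 * I / m) * M * m := e.symm
            _ ≤ (4 * I / m) * M * Real.sqrt (1 + x ^ 2) ^ (-a + 1) := by
                refine mul_le_mul_of_nonneg_left hvm ?_
                exact mul_nonneg (div_nonneg (by linarith) hm0.le) hM
        have h4 : (4 * I / m) * M * Real.sqrt (1 + x ^ 2) ^ (-a + 1)
            ≤ C * M * Real.sqrt (1 + x ^ 2) ^ (-a + 1) := by
          have hle : 4 * I / m ≤ C := by rw [hCdef]; linarith
          calc (4 * I / m) * M * Real.sqrt (1 + x ^ 2) ^ (-a + 1)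
              = (4 * I / m) * (M * Real.sqrt (1 + x ^ 2) ^ (-a + 1)) := by ring
            _ ≤ C * (M * Real.sqrt (1 + x ^ 2) ^ (-a + 1)) :=
                mul_le_mul_of_nonneg_right hle (mul_nonneg hM hvx.le)
            _ = C * M * Real.sqrt (1 + x ^ 2) ^ (-a + 1) := by ring
        exact le_trans h2 (le_trans h3 h4)
end

section
/- Let S(t,x) satisfy |S(t,x)| ≤ C₀ (|x| + √t)^{-3} for t > 0, and let g : ℝ × ℝ³ → ℝ³ be bounded and supported in {|y| ≤ 1} in space. Define (Λg)(t,x) = ∫₀^∞ ∫_{|y|≤1} S(s, x−y) g(t−s, y) dy ds. Then there is a constant C with |Λg(t,x)| ≤ C ‖g‖_∞ / |x| for all |x| > 2 and all t. -/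
/-! Since `‖x - y‖ ≥ ‖x‖ / 2 =: a` for `‖y‖ ≤ 1 < 2 < ‖x‖`, and `(a + √s)² ≥ a² + s`, the kernel
obeys `‖S s (x - y)‖ ≤ C₀ (s + a²)^(-3/2)` uniformly on the unit ball. Integrating first over the
ball and then in time, `∫₀^∞ (s + a²)^(-3/2) ds = 2 / a = 4 / ‖x‖` gives the `1 / ‖x‖` decay. -/

open MeasureTheory Real Set Filter Topology

theorem integral_Ioi_add_rpow_of_lt {a m : ℝ} (ha : a < -1) (hm : 0 < m) :
    ∫ s in Ioi (0 : ℝ), (s + m) ^ a = -m ^ (a + 1) / (a + 1) := by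
  have hderiv : ∀ s ∈ Ici (0 : ℝ),
      HasDerivAt (fun s ↦ (s + m) ^ (a + 1) / (a + 1)) ((s + m) ^ a) s := by
    intro s hs
    have hpos : 0 < s + m := by linarith [mem_Ici.mp hs]
    have h := (((hasDerivAt_id s).add_const m).rpow_const (p := a + 1) (Or.inl hpos.ne')).div_const
      (a + 1)
    simp only [id, one_mul, add_sub_cancel_right] at h
    rwa [mul_div_cancel_left₀ _ (by linarith : a + 1 ≠ 0)] at h
  have hlim : Tendsto (fun s ↦ (s + m) ^ (a + 1) / (a + 1)) atTop (𝓝 (0 / (a + 1))) := by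
    rw [← neg_neg (a + 1)]
    exact ((tendsto_rpow_neg_atTop (by linarith)).comp
      (tendsto_atTop_add_const_right _ m tendsto_id)).div_const _
  rw [integral_Ioi_of_hasDerivAt_of_tendsto' hderiv
    (integrableOn_add_rpow_Ioi_of_lt ha (by linarith)) hlim]
  simp [neg_div]

theorem integral_Ioi_add_sq_rpow_neg_three_halves {a : ℝ} (ha : 0 < a) :
    ∫ s in Ioi (0 : ℝ), (s + a ^ 2) ^ (-(3 / 2) : ℝ) = 2 / a := by
  rw [integral_Ioi_add_rpow_of_lt (by norm_num) (by positivity), ← rpow_natCast,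
    ← rpow_mul ha.le]
  norm_num [rpow_neg_one]
  ring

theorem add_sqrt_rpow_neg_three_le {a u s : ℝ} (ha : 0 < a) (hau : a ≤ u) (hs : 0 ≤ s) :
    (u + √s) ^ (-3 : ℝ) ≤ (s + a ^ 2) ^ (-(3 / 2) : ℝ) := by
  have hsqrt : √(s + a ^ 2) ≤ u + √s := by
    rw [sqrt_le_left (by linarith [sqrt_nonneg s])]
    nlinarith [sq_sqrt hs, sqrt_nonneg s]
  calc (u + √s) ^ (-3 : ℝ) ≤ √(s + a ^ 2) ^ (-3 : ℝ) :=
        rpow_le_rpow_of_nonpos (sqrt_pos.2 (by positivity)) hsqrt (by norm_num)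
    _ = (s + a ^ 2) ^ (-(3 / 2) : ℝ) := by
        rw [sqrt_eq_rpow, ← rpow_mul (by positivity)]
        norm_num

theorem stmt16 (C₀ : ℝ) (hC₀ : 0 < C₀)
    (S : ℝ → EuclideanSpace ℝ (Fin 3) →
      (EuclideanSpace ℝ (Fin 3) →L[ℝ] EuclideanSpace ℝ (Fin 3)))
    (hS : ∀ t : ℝ, 0 < t → ∀ z, ‖S t z‖ ≤ C₀ * (‖z‖ + Real.sqrt t) ^ (-(3 : ℝ))) :
    ∃ C : ℝ, 0 < C ∧
      ∀ (M : ℝ) (g : ℝ → EuclideanSpace ℝ (Fin 3) → EuclideanSpace ℝ (Fin 3)),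
        Measurable (Function.uncurry g) →
        (∀ t y, ‖g t y‖ ≤ M) →
        (∀ t y, 1 < ‖y‖ → g t y = 0) →
        ∀ (t : ℝ) (x : EuclideanSpace ℝ (Fin 3)), 2 < ‖x‖ →
          ‖∫ s in Set.Ioi (0 : ℝ),
              ∫ y in Metric.closedBall (0 : EuclideanSpace ℝ (Fin 3)) 1, S s (x - y) (g (t - s) y)‖
            ≤ C * M / ‖x‖ := by
  set B := Metric.closedBall (0 : EuclideanSpace ℝ (Fin 3)) 1
  have hV : 0 < volume.real B :=
    ENNReal.toReal_pos (Metric.measure_closedBall_pos _ _ one_pos).ne' measure_closedBall_lt_top.ne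
  refine ⟨4 * C₀ * volume.real B, by positivity, ?_⟩
  intro M g _ hg _ t x hx
  have hM : 0 ≤ M := (norm_nonneg _).trans (hg 0 0)
  set a := ‖x‖ / 2 with ha_def
  have ha : 0 < a := by positivity
  have hkernel : ∀ s ∈ Ioi (0 : ℝ), ∀ y ∈ B,
      ‖S s (x - y) (g (t - s) y)‖ ≤ C₀ * M * (s + a ^ 2) ^ (-(3 / 2) : ℝ) := by
    intro s hs y hy
    have hy : ‖y‖ ≤ 1 := mem_closedBall_zero_iff.1 hy
    have hxy : a ≤ ‖x - y‖ := by linarith [norm_sub_norm_le x y, ha_def]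
    calc ‖S s (x - y) (g (t - s) y)‖ ≤ ‖S s (x - y)‖ * ‖g (t - s) y‖ := (S s (x - y)).le_opNorm _
      _ ≤ C₀ * (‖x - y‖ + √s) ^ (-(3 : ℝ)) * M := by gcongr; exacts [hS s hs _, hg _ _]
      _ ≤ C₀ * (s + a ^ 2) ^ (-(3 / 2) : ℝ) * M := by
          gcongr; exact add_sqrt_rpow_neg_three_le ha hxy (le_of_lt hs)
      _ = C₀ * M * (s + a ^ 2) ^ (-(3 / 2) : ℝ) := by ring
  have hinner : ∀ s ∈ Ioi (0 : ℝ), ‖∫ y in B, S s (x - y) (g (t - s) y)‖ ≤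
      volume.real B * C₀ * M * (s + a ^ 2) ^ (-(3 / 2) : ℝ) := fun s hs ↦
    (norm_setIntegral_le_of_norm_le_const measure_closedBall_lt_top (hkernel s hs)).trans_eq
      (by ring)
  calc _ ≤ ∫ s in Ioi (0 : ℝ), volume.real B * C₀ * M * (s + a ^ 2) ^ (-(3 / 2) : ℝ) :=
        norm_integral_le_of_norm_le
          ((integrableOn_add_rpow_Ioi_of_lt (by norm_num) (by simpa using pow_pos ha 2)).const_mul _)
          ((ae_restrict_iff' measurableSet_Ioi).2 (Eventually.of_forall hinner))
    _ = 4 * C₀ * volume.real B * M / ‖x‖ := by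
        rw [integral_const_mul, integral_Ioi_add_sq_rpow_neg_three_halves ha]
        field_simp
        ring
end

section
/- Let 0 < α < 2 and let G : ℝ × ℝ³ → ℝ^{3×3} satisfy |G(t,y)| ≤ M (1+|y|)^{-α-1} for all t, y. Suppose K(s, z) satisfies |K(s,z)| ≤ C₀ (|z| + √s)^{-4}. Define (ΘG)(t,x) = ∫₀^∞ ∫_{ℝ³} K(s, x−y) G(t−s, y) dy ds. Then there is C = C(α, C₀) with |ΘG(t,x)| ≤ C M (1 + |x|)^{-α} for all t and x. -/
/-!
Bound `|K(s, x - y)| |G(t - s, y)|` by the majorant `C₀ M (|x - y| + √s)^{-(m+2)} (1 + |y|)^{-α-1}`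
and work with lower Lebesgue integrals throughout, so that no measurability or integrability
of `K` and `G` is needed. Splitting at `s = |z|²` gives
`∫₀^∞ (|z| + √s)^{-(m+2)} ds ≤ (m+2)/m · |z|^{-m}`, and Tonelli reduces the claim to the spatial
estimate `∫ |x - y|^{-m} (1 + |y|)^{-α-1} dy ≲ (1 + |x|)^{-α}` in dimension `m + 1`.
With `R = 1 + |x|`, split space into the ball of radius `R/2` around `x` (where `1 + |y| ≥ R/2`),
the rest of the ball of radius `2R` around `0` (where `|x - y| > R/2`) and the exterior
(where `|x - y| ≥ |y|/2`); on each piece the integral is bounded by a power integral over a ball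
or its complement, computed in polar coordinates. The conditions `0 < α < m` are exactly the
integrability of these powers at infinity and at the origin.
-/

open MeasureTheory Measure Set Metric Module
open scoped ENNReal

lemma lintegral_Ioc_rpow {b q : ℝ} (hb : 0 < b) (hq : -1 < q) :
    ∫⁻ r in Ioc 0 b, ENNReal.ofReal (r ^ q) = ENNReal.ofReal (b ^ (q + 1) / (q + 1)) := by
  have hint : IntegrableOn (fun r : ℝ => r ^ q) (Ioc 0 b) :=
    (intervalIntegrable_iff_integrableOn_Ioc_of_le hb.le).mp
      (intervalIntegral.intervalIntegrable_rpow' hq)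
  rw [← ofReal_integral_eq_lintegral_ofReal hint, ← intervalIntegral.integral_of_le hb.le,
    integral_rpow (.inl hq), Real.zero_rpow (by linarith), sub_zero]
  filter_upwards [ae_restrict_mem measurableSet_Ioc] with r hr
  exact Real.rpow_nonneg hr.1.le _

lemma lintegral_Ioi_rpow {c p : ℝ} (hc : 0 < c) (hp : p < -1) :
    ∫⁻ r in Ioi c, ENNReal.ofReal (r ^ p) = ENNReal.ofReal (-c ^ (p + 1) / (p + 1)) := by
  rw [← ofReal_integral_eq_lintegral_ofReal ((integrableOn_Ioi_rpow_iff hc).mpr hp),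
    integral_Ioi_rpow_of_lt hp hc]
  filter_upwards [ae_restrict_mem measurableSet_Ioi] with r hr
  exact Real.rpow_nonneg (hc.trans hr).le _

lemma lintegral_Ioi_add_sqrt_rpow_le {a p : ℝ} (ha : 0 < a) (hp : 2 < p) :
    ∫⁻ s in Ioi 0, ENNReal.ofReal ((a + √s) ^ (-p)) ≤
      ENNReal.ofReal (p / (p - 2) * a ^ (2 - p)) := by
  have hp2 : p - 2 ≠ 0 := by linarith
  have hp2' : 2 - p ≠ 0 := by linarith
  have hnear : ∫⁻ s in Ioc 0 (a ^ 2), ENNReal.ofReal ((a + √s) ^ (-p)) ≤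
      ENNReal.ofReal (a ^ (2 - p)) :=
    calc ∫⁻ s in Ioc 0 (a ^ 2), ENNReal.ofReal ((a + √s) ^ (-p))
        ≤ ∫⁻ _ in Ioc 0 (a ^ 2), ENNReal.ofReal (a ^ (-p)) := by
          refine setLIntegral_mono' measurableSet_Ioc fun s _ => ENNReal.ofReal_le_ofReal ?_
          exact Real.rpow_le_rpow_of_nonpos ha (by simp [Real.sqrt_nonneg]) (by linarith)
      _ = ENNReal.ofReal (a ^ (2 - p)) := by
          rw [setLIntegral_const, Real.volume_Ioc, sub_zero, ← ENNReal.ofReal_mul (by positivity),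
            ← Real.rpow_natCast, ← Real.rpow_add ha]
          ring_nf
  have hfar : ∫⁻ s in Ioi (a ^ 2), ENNReal.ofReal ((a + √s) ^ (-p)) ≤
      ENNReal.ofReal (2 / (p - 2) * a ^ (2 - p)) :=
    calc ∫⁻ s in Ioi (a ^ 2), ENNReal.ofReal ((a + √s) ^ (-p))
        ≤ ∫⁻ s in Ioi (a ^ 2), ENNReal.ofReal (s ^ (-p / 2)) := by
          refine setLIntegral_mono' measurableSet_Ioi fun s hs => ENNReal.ofReal_le_ofReal ?_
          have hs0 : 0 < s := (pow_pos ha 2).trans hs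
          calc (a + √s) ^ (-p) ≤ √s ^ (-p) :=
                Real.rpow_le_rpow_of_nonpos (Real.sqrt_pos.mpr hs0) (by linarith) (by linarith)
            _ = s ^ (-p / 2) := by
                rw [Real.sqrt_eq_rpow, ← Real.rpow_mul hs0.le]
                ring_nf
      _ = ENNReal.ofReal (2 / (p - 2) * a ^ (2 - p)) := by
          rw [lintegral_Ioi_rpow (pow_pos ha 2) (by linarith), ← Real.rpow_natCast,
            ← Real.rpow_mul ha.le]
          congr 1
          rw [show ((2 : ℕ) : ℝ) * (-p / 2 + 1) = 2 - p by push_cast; ring,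
            show -p / 2 + 1 = (2 - p) / 2 by ring]
          field_simp
          ring
  calc ∫⁻ s in Ioi 0, ENNReal.ofReal ((a + √s) ^ (-p))
      ≤ ∫⁻ s in Ioc 0 (a ^ 2) ∪ Ioi (a ^ 2), ENNReal.ofReal ((a + √s) ^ (-p)) :=
        lintegral_mono_set Ioi_subset_Ioc_union_Ioi
    _ ≤ ENNReal.ofReal (a ^ (2 - p)) + ENNReal.ofReal (2 / (p - 2) * a ^ (2 - p)) :=
        (lintegral_union_le _ _ _).trans (add_le_add hnear hfar)
    _ = ENNReal.ofReal (p / (p - 2) * a ^ (2 - p)) := by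
        rw [← ENNReal.ofReal_add (by positivity) (by positivity)]
        congr 1
        field_simp
        ring

lemma setLIntegral_closedBall_norm_sub {E : Type*} [NormedAddCommGroup E] [MeasurableSpace E]
    [BorelSpace E] (μ : Measure E) [μ.IsAddRightInvariant] (f : ℝ → ℝ≥0∞) (x : E) (r : ℝ) :
    ∫⁻ y in closedBall x r, f ‖x - y‖ ∂μ = ∫⁻ z in closedBall 0 r, f ‖z‖ ∂μ := by
  have hball : closedBall x r = (· - x) ⁻¹' closedBall 0 r := by
    ext y
    simp [dist_eq_norm]
  simp_rw [hball, norm_sub_rev x]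
  exact (measurePreserving_sub_right μ x).setLIntegral_comp_preimage_emb
    (MeasurableEquiv.subRight x).measurableEmbedding (fun z => f ‖z‖) _

lemma enorm_integral_integral_smul_le {E F : Type*} [AddGroup E] [MeasurableSpace E]
    [NormedAddCommGroup F] [NormedSpace ℝ F] (μ : Measure E) {K k : ℝ → E → ℝ} {G : ℝ → E → F}
    {g : E → ℝ} (hK : ∀ s, 0 < s → ∀ z, |K s z| ≤ k s z) (hG : ∀ t y, ‖G t y‖ ≤ g y)
    (t : ℝ) (x : E) :
    ‖∫ s in Ioi 0, ∫ y, K s (x - y) • G (t - s) y ∂μ‖ₑ ≤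
      ∫⁻ s in Ioi 0, ∫⁻ y, ENNReal.ofReal (k s (x - y)) * ENNReal.ofReal (g y) ∂μ := by
  refine (enorm_integral_le_lintegral_enorm _).trans
    (setLIntegral_mono' measurableSet_Ioi fun s hs => ?_)
  refine (enorm_integral_le_lintegral_enorm _).trans (lintegral_mono fun y => ?_)
  have hk := hK s hs (x - y)
  rw [← ofReal_norm, norm_smul, Real.norm_eq_abs, ← ENNReal.ofReal_mul ((abs_nonneg _).trans hk)]
  exact ENNReal.ofReal_le_ofReal (mul_le_mul hk (hG _ y) (norm_nonneg _) ((abs_nonneg _).trans hk))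

lemma lintegral_Ioi_lintegral_add_sqrt_rpow_mul_le {E : Type*} [NormedAddCommGroup E]
    [MeasurableSpace E] [BorelSpace E] (μ : Measure E) [SFinite μ] [NullSingletonClass μ]
    {C₀ p : ℝ} (hp : 2 < p) {g : E → ℝ} (hg : Measurable g) (x : E) :
    ∫⁻ s in Ioi 0, ∫⁻ y, ENNReal.ofReal (C₀ * (‖x - y‖ + √s) ^ (-p)) * ENNReal.ofReal (g y) ∂μ ≤
      ENNReal.ofReal (p / (p - 2) * C₀) *
        ∫⁻ y, ENNReal.ofReal (‖x - y‖ ^ (2 - p)) * ENNReal.ofReal (g y) ∂μ := by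
  rw [lintegral_lintegral_swap (by fun_prop), ← lintegral_const_mul' _ _ ENNReal.ofReal_ne_top]
  have hne : ∀ᵐ y ∂μ, y ≠ x := compl_mem_ae_iff.mpr (measure_singleton x)
  refine lintegral_mono_ae (hne.mono fun y hy => ?_)
  have hxy : 0 < ‖x - y‖ := norm_pos_iff.mpr (sub_ne_zero.mpr hy.symm)
  calc ∫⁻ s in Ioi 0, ENNReal.ofReal (C₀ * (‖x - y‖ + √s) ^ (-p)) * ENNReal.ofReal (g y)
      = ENNReal.ofReal C₀ * (∫⁻ s in Ioi 0, ENNReal.ofReal ((‖x - y‖ + √s) ^ (-p))) *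
          ENNReal.ofReal (g y) := by
        rw [← lintegral_const_mul' _ _ ENNReal.ofReal_ne_top,
          ← lintegral_mul_const' _ _ ENNReal.ofReal_ne_top]
        exact lintegral_congr fun s => by rw [ENNReal.ofReal_mul' (by positivity)]
    _ ≤ ENNReal.ofReal C₀ * ENNReal.ofReal (p / (p - 2) * ‖x - y‖ ^ (2 - p)) *
          ENNReal.ofReal (g y) := by
        gcongr
        exact lintegral_Ioi_add_sqrt_rpow_le hxy hp
    _ = _ := by
        have hp' : 0 ≤ p / (p - 2) := div_nonneg (by linarith) (by linarith)
        rw [ENNReal.ofReal_mul hp', ENNReal.ofReal_mul hp']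
        ring

section AddHaar

variable {E : Type*} [NormedAddCommGroup E] [NormedSpace ℝ E] [FiniteDimensional ℝ E]
  [MeasurableSpace E] [BorelSpace E] (μ : Measure E) [μ.IsAddHaarMeasure]

lemma lintegral_fun_norm_addHaar [Nontrivial E] {f : ℝ → ℝ≥0∞} (hf : Measurable f) :
    ∫⁻ x, f ‖x‖ ∂μ =
      μ.toSphere univ * ∫⁻ r in Ioi 0, ENNReal.ofReal (r ^ (finrank ℝ E - 1)) * f r := by
  have hmeas : Measurable (f ∘ Subtype.val ∘ Prod.snd :
      sphere (0 : E) 1 × Ioi (0 : ℝ) → ℝ≥0∞) :=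
    hf.comp (measurable_subtype_coe.comp measurable_snd)
  calc ∫⁻ x, f ‖x‖ ∂μ = ∫⁻ x : ({0}ᶜ : Set E), f ‖x.1‖ ∂(μ.comap Subtype.val) := by
        rw [lintegral_subtype_comap (measurableSet_singleton _).compl (fun x => f ‖x‖),
          restrict_compl_singleton]
    _ = ∫⁻ p, (f ∘ Subtype.val ∘ Prod.snd) p
          ∂(μ.toSphere.prod (volumeIoiPow (finrank ℝ E - 1))) := by
        rw [← μ.measurePreserving_homeomorphUnitSphereProd.lintegral_comp hmeas]
        simp
    _ = μ.toSphere univ * ∫⁻ r, f r ∂(volumeIoiPow (finrank ℝ E - 1)) := by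
        rw [lintegral_prod _ hmeas.aemeasurable]
        simp [lintegral_const, mul_comm]
    _ = _ := by
        rw [volumeIoiPow, lintegral_withDensity_eq_lintegral_mul _ (by fun_prop)
          (g := fun r : Ioi (0 : ℝ) => f r) (hf.comp measurable_subtype_coe)]
        exact congrArg _ (lintegral_subtype_comap measurableSet_Ioi
          (fun r => ENNReal.ofReal (r ^ (finrank ℝ E - 1)) * f r))

variable {m : ℕ} (hE : finrank ℝ E = m + 1)
include hE

lemma setLIntegral_norm_preimage {f : ℝ → ℝ≥0∞} (hf : Measurable f) {S : Set ℝ}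
    (hS : MeasurableSet S) :
    ∫⁻ x in norm ⁻¹' S, f ‖x‖ ∂μ =
      μ.toSphere univ * ∫⁻ r in Ioi 0 ∩ S, ENNReal.ofReal (r ^ m) * f r := by
  have : Nontrivial E := nontrivial_of_finrank_eq_succ hE
  rw [← lintegral_indicator (hS.preimage measurable_norm),
    inter_comm, ← restrict_restrict hS, ← lintegral_indicator hS]
  have := lintegral_fun_norm_addHaar μ (hf.indicator hS)
  rw [hE, add_tsub_cancel_right] at this
  simp only [indicator_mul_right, ← indicator_comp_right] at this ⊢
  exact this

lemma setLIntegral_norm_preimage_rpow {p : ℝ} {S : Set ℝ} (hS : MeasurableSet S) :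
    ∫⁻ x in norm ⁻¹' S, ENNReal.ofReal (‖x‖ ^ p) ∂μ =
      μ.toSphere univ * ∫⁻ r in Ioi 0 ∩ S, ENNReal.ofReal (r ^ (p + m)) := by
  rw [setLIntegral_norm_preimage μ hE (f := fun r => ENNReal.ofReal (r ^ p)) (by fun_prop) hS]
  congr 1
  refine setLIntegral_congr_fun (measurableSet_Ioi.inter hS) fun r hr => ?_
  rw [← ENNReal.ofReal_mul (pow_nonneg hr.1.le _), ← Real.rpow_natCast, ← Real.rpow_add hr.1,
    add_comm]

lemma setLIntegral_closedBall_norm_rpow {b p : ℝ} (hb : 0 < b) (hp : -(m + 1 : ℝ) < p) :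
    ∫⁻ x in closedBall (0 : E) b, ENNReal.ofReal (‖x‖ ^ p) ∂μ =
      μ.toSphere univ * ENNReal.ofReal (b ^ (p + m + 1) / (p + m + 1)) := by
  rw [show closedBall (0 : E) b = norm ⁻¹' Iic b by ext; simp,
    setLIntegral_norm_preimage_rpow μ hE measurableSet_Iic, Ioi_inter_Iic,
    lintegral_Ioc_rpow hb (by linarith)]

lemma setLIntegral_compl_closedBall_norm_rpow {c p : ℝ} (hc : 0 < c) (hp : p < -(m + 1 : ℝ)) :
    ∫⁻ x in (closedBall (0 : E) c)ᶜ, ENNReal.ofReal (‖x‖ ^ p) ∂μ =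
      μ.toSphere univ * ENNReal.ofReal (-c ^ (p + m + 1) / (p + m + 1)) := by
  rw [show closedBall (0 : E) c = norm ⁻¹' Iic c by ext; simp, ← preimage_compl, compl_Iic,
    setLIntegral_norm_preimage_rpow μ hE measurableSet_Ioi, Ioi_inter_Ioi, max_eq_right hc.le,
    lintegral_Ioi_rpow hc (by linarith)]

variable {α : ℝ}

lemma setLIntegral_closedBall_self_le (hα : 0 ≤ α) (x : E) :
    ∫⁻ y in closedBall x ((1 + ‖x‖) / 2),
        ENNReal.ofReal (‖x - y‖ ^ (-(m : ℝ))) * ENNReal.ofReal ((1 + ‖y‖) ^ (-α - 1)) ∂μ ≤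
      μ.toSphere univ * ENNReal.ofReal (2 ^ α * (1 + ‖x‖) ^ (-α)) := by
  set R := 1 + ‖x‖
  have hR : 0 < R / 2 := by positivity
  calc ∫⁻ y in closedBall x (R / 2),
          ENNReal.ofReal (‖x - y‖ ^ (-(m : ℝ))) * ENNReal.ofReal ((1 + ‖y‖) ^ (-α - 1)) ∂μ
      ≤ ∫⁻ y in closedBall x (R / 2),
          ENNReal.ofReal (‖x - y‖ ^ (-(m : ℝ))) * ENNReal.ofReal ((R / 2) ^ (-α - 1)) ∂μ := by
        refine setLIntegral_mono' measurableSet_closedBall fun y hy => ?_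
        have hy : ‖x - y‖ ≤ R / 2 := by rwa [mem_closedBall, dist_comm, dist_eq_norm] at hy
        have : R / 2 ≤ 1 + ‖y‖ := by linarith [norm_le_norm_add_norm_sub' x y]
        exact mul_le_mul_right (ENNReal.ofReal_le_ofReal
          (Real.rpow_le_rpow_of_nonpos hR this (by linarith))) _
    _ = μ.toSphere univ * ENNReal.ofReal (R / 2) * ENNReal.ofReal ((R / 2) ^ (-α - 1)) := by
        rw [lintegral_mul_const' _ _ ENNReal.ofReal_ne_top,
          setLIntegral_closedBall_norm_sub μ (fun r => ENNReal.ofReal (r ^ (-(m : ℝ)))),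
          setLIntegral_closedBall_norm_rpow μ hE hR (by linarith)]
        norm_num
    _ = μ.toSphere univ * ENNReal.ofReal (2 ^ α * R ^ (-α)) := by
        rw [mul_assoc, ← ENNReal.ofReal_mul hR.le]
        congr 2
        have hR0 : R ≠ 0 := by positivity
        rw [Real.div_rpow (by positivity) zero_le_two, Real.rpow_sub_one hR0,
          Real.rpow_sub_one two_ne_zero, Real.rpow_neg zero_le_two]
        field_simp

lemma setLIntegral_closedBall_diff_closedBall_le (hα : 0 ≤ α) (hαm : α < m) (x : E) :
    ∫⁻ y in closedBall 0 (2 * (1 + ‖x‖)) ∩ (closedBall x ((1 + ‖x‖) / 2))ᶜ,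
        ENNReal.ofReal (‖x - y‖ ^ (-(m : ℝ))) * ENNReal.ofReal ((1 + ‖y‖) ^ (-α - 1)) ∂μ ≤
      μ.toSphere univ * ENNReal.ofReal (2 ^ (2 * m - α) / (m - α) * (1 + ‖x‖) ^ (-α)) := by
  set R := 1 + ‖x‖
  have hR : 0 < R := by positivity
  have : Nontrivial E := nontrivial_of_finrank_eq_succ hE
  have hne : ∀ᵐ y ∂μ, y ≠ 0 := compl_mem_ae_iff.mpr (measure_singleton 0)
  calc ∫⁻ y in closedBall 0 (2 * R) ∩ (closedBall x (R / 2))ᶜ,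
          ENNReal.ofReal (‖x - y‖ ^ (-(m : ℝ))) * ENNReal.ofReal ((1 + ‖y‖) ^ (-α - 1)) ∂μ
      ≤ ∫⁻ y in closedBall 0 (2 * R) ∩ (closedBall x (R / 2))ᶜ,
          ENNReal.ofReal ((R / 2) ^ (-(m : ℝ))) * ENNReal.ofReal (‖y‖ ^ (-α - 1)) ∂μ := by
        refine lintegral_mono_ae ?_
        filter_upwards [ae_restrict_mem (measurableSet_closedBall.inter
          measurableSet_closedBall.compl), ae_restrict_of_ae hne] with y hy hy0
        have hxy : R / 2 < ‖x - y‖ := by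
          simpa [dist_comm, dist_eq_norm] using hy.2
        exact mul_le_mul' (ENNReal.ofReal_le_ofReal
            (Real.rpow_le_rpow_of_nonpos (by positivity) hxy.le (by simp)))
          (ENNReal.ofReal_le_ofReal
            (Real.rpow_le_rpow_of_nonpos (norm_pos_iff.mpr hy0) (by linarith) (by linarith)))
    _ ≤ ENNReal.ofReal ((R / 2) ^ (-(m : ℝ))) *
          ∫⁻ y in closedBall 0 (2 * R), ENNReal.ofReal (‖y‖ ^ (-α - 1)) ∂μ := by
        rw [lintegral_const_mul' _ _ ENNReal.ofReal_ne_top]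
        exact mul_le_mul_right (lintegral_mono_set inter_subset_left) _
    _ = μ.toSphere univ * ENNReal.ofReal (2 ^ (2 * m - α) / (m - α) * R ^ (-α)) := by
        rw [setLIntegral_closedBall_norm_rpow μ hE (by positivity) (by linarith), mul_left_comm,
          ← ENNReal.ofReal_mul (by positivity)]
        congr 2
        rw [show -α - 1 + (m : ℝ) + 1 = m - α by ring, show 2 * (m : ℝ) - α = m + (m - α) by ring,
          Real.rpow_add two_pos, Real.div_rpow hR.le zero_le_two, Real.mul_rpow zero_le_two hR.le,
          Real.rpow_sub hR, Real.rpow_neg hR.le, Real.rpow_neg hR.le, Real.rpow_neg zero_le_two]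
        field_simp

lemma setLIntegral_compl_closedBall_le (hα : 0 < α) (x : E) :
    ∫⁻ y in (closedBall 0 (2 * (1 + ‖x‖)))ᶜ,
        ENNReal.ofReal (‖x - y‖ ^ (-(m : ℝ))) * ENNReal.ofReal ((1 + ‖y‖) ^ (-α - 1)) ∂μ ≤
      μ.toSphere univ * ENNReal.ofReal (2 ^ (m - α) / α * (1 + ‖x‖) ^ (-α)) := by
  set R := 1 + ‖x‖
  have hR : 0 < R := by positivity
  calc ∫⁻ y in (closedBall 0 (2 * R))ᶜ,
          ENNReal.ofReal (‖x - y‖ ^ (-(m : ℝ))) * ENNReal.ofReal ((1 + ‖y‖) ^ (-α - 1)) ∂μ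
      ≤ ∫⁻ y in (closedBall 0 (2 * R))ᶜ,
          ENNReal.ofReal (2 ^ (m : ℝ)) * ENNReal.ofReal (‖y‖ ^ (-α - 1 - m)) ∂μ := by
        refine setLIntegral_mono' measurableSet_closedBall.compl fun y hy => ?_
        have hy : 2 * R < ‖y‖ := by simpa using hy
        have hy0 : 0 < ‖y‖ := by linarith
        have hxy : ‖y‖ / 2 ≤ ‖x - y‖ := by
          linarith [norm_sub_norm_le y x, norm_sub_rev x y]
        have hsplit : 2 ^ (m : ℝ) * ‖y‖ ^ (-α - 1 - m) =
            (‖y‖ / 2) ^ (-(m : ℝ)) * ‖y‖ ^ (-α - 1) := by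
          rw [sub_eq_add_neg _ (m : ℝ), Real.rpow_add hy0, Real.div_rpow hy0.le zero_le_two,
            Real.rpow_neg zero_le_two]
          field_simp
        calc _ ≤ ENNReal.ofReal ((‖y‖ / 2) ^ (-(m : ℝ))) * ENNReal.ofReal (‖y‖ ^ (-α - 1)) :=
              mul_le_mul' (ENNReal.ofReal_le_ofReal
                (Real.rpow_le_rpow_of_nonpos (by positivity) hxy (by simp)))
              (ENNReal.ofReal_le_ofReal
                (Real.rpow_le_rpow_of_nonpos hy0 (by linarith) (by linarith)))
          _ = _ := by
              rw [← ENNReal.ofReal_mul (by positivity), ← hsplit,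
                ENNReal.ofReal_mul (by positivity)]
    _ = μ.toSphere univ * ENNReal.ofReal (2 ^ (m - α) / α * R ^ (-α)) := by
        rw [lintegral_const_mul' _ _ ENNReal.ofReal_ne_top,
          setLIntegral_compl_closedBall_norm_rpow μ hE (by positivity) (by linarith),
          mul_left_comm, ← ENNReal.ofReal_mul (by positivity)]
        congr 2
        rw [show -α - 1 - m + m + 1 = -α by ring, Real.rpow_sub two_pos,
          Real.mul_rpow zero_le_two hR.le, Real.rpow_neg zero_le_two]
        field_simp

lemma lintegral_norm_sub_rpow_mul_one_add_norm_rpow_le (hα : 0 < α) (hαm : α < m) (x : E) :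
    ∫⁻ y, ENNReal.ofReal (‖x - y‖ ^ (-(m : ℝ))) * ENNReal.ofReal ((1 + ‖y‖) ^ (-α - 1)) ∂μ ≤
      μ.toSphere univ * ENNReal.ofReal
        ((2 ^ α + 2 ^ (2 * m - α) / (m - α) + 2 ^ (m - α) / α) * (1 + ‖x‖) ^ (-α)) := by
  set F := fun y => ENNReal.ofReal (‖x - y‖ ^ (-(m : ℝ))) * ENNReal.ofReal ((1 + ‖y‖) ^ (-α - 1))
  set A := closedBall x ((1 + ‖x‖) / 2)
  set B := closedBall (0 : E) (2 * (1 + ‖x‖))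
  have hαm' : 0 < m - α := by linarith
  calc ∫⁻ y, F y ∂μ = ∫⁻ y in A, F y ∂μ + ∫⁻ y in Aᶜ, F y ∂μ :=
        (lintegral_add_compl F measurableSet_closedBall).symm
    _ ≤ ∫⁻ y in A, F y ∂μ + (∫⁻ y in B ∩ Aᶜ, F y ∂μ + ∫⁻ y in Bᶜ, F y ∂μ) := by
        gcongr
        calc ∫⁻ y in Aᶜ, F y ∂μ ≤ ∫⁻ y in B ∩ Aᶜ ∪ Bᶜ, F y ∂μ :=
              lintegral_mono_set fun y hy => by by_cases hyB : y ∈ B <;> simp_all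
          _ ≤ _ := lintegral_union_le _ _ _
    _ ≤ μ.toSphere univ * ENNReal.ofReal (2 ^ α * (1 + ‖x‖) ^ (-α)) +
          (μ.toSphere univ * ENNReal.ofReal (2 ^ (2 * m - α) / (m - α) * (1 + ‖x‖) ^ (-α)) +
            μ.toSphere univ * ENNReal.ofReal (2 ^ (m - α) / α * (1 + ‖x‖) ^ (-α))) :=
        add_le_add (setLIntegral_closedBall_self_le μ hE hα.le x)
          (add_le_add (setLIntegral_closedBall_diff_closedBall_le μ hE hα.le hαm x)
            (setLIntegral_compl_closedBall_le μ hE hα x))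
    _ = _ := by
        rw [← mul_add, ← mul_add, ← ENNReal.ofReal_add (by positivity) (by positivity),
          ← ENNReal.ofReal_add (by positivity) (by positivity)]
        congr 2
        ring

theorem norm_integral_Ioi_integral_smul_le {F : Type*} [NormedAddCommGroup F] [NormedSpace ℝ F]
    (hα : 0 < α) (hαm : α < m) {C₀ M : ℝ} {K : ℝ → E → ℝ} {G : ℝ → E → F}
    (hK : ∀ s, 0 < s → ∀ z, |K s z| ≤ C₀ * (‖z‖ + √s) ^ (-(m + 2 : ℝ)))
    (hG : ∀ t y, ‖G t y‖ ≤ M * (1 + ‖y‖) ^ (-α - 1)) (t : ℝ) (x : E) :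
    ‖∫ s in Ioi 0, ∫ y, K s (x - y) • G (t - s) y ∂μ‖ ≤
      (m + 2) / m * C₀ * (μ.toSphere univ).toReal *
        (2 ^ α + 2 ^ (2 * m - α) / (m - α) + 2 ^ (m - α) / α) * M * (1 + ‖x‖) ^ (-α) := by
  have : Nontrivial E := nontrivial_of_finrank_eq_succ hE
  have hm : (0 : ℝ) < m := hα.trans hαm
  have hC₀ : 0 ≤ C₀ := by simpa using (abs_nonneg _).trans (hK 1 one_pos 0)
  have hM : 0 ≤ M := by simpa using (norm_nonneg _).trans (hG 0 0)
  set c := 2 ^ α + 2 ^ (2 * m - α) / (m - α) + 2 ^ (m - α) / α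
  have hc : 0 ≤ c := by
    have : 0 < (m : ℝ) - α := by linarith
    positivity
  rw [← ENNReal.ofReal_le_ofReal_iff (by positivity), ofReal_norm]
  calc ‖∫ s in Ioi 0, ∫ y, K s (x - y) • G (t - s) y ∂μ‖ₑ
      ≤ ∫⁻ s in Ioi 0, ∫⁻ y, ENNReal.ofReal (C₀ * (‖x - y‖ + √s) ^ (-(m + 2 : ℝ))) *
          ENNReal.ofReal (M * (1 + ‖y‖) ^ (-α - 1)) ∂μ :=
        enorm_integral_integral_smul_le μ hK hG t x
    _ ≤ ENNReal.ofReal ((m + 2) / m * C₀) * ENNReal.ofReal M *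
          ∫⁻ y, ENNReal.ofReal (‖x - y‖ ^ (-(m : ℝ))) *
            ENNReal.ofReal ((1 + ‖y‖) ^ (-α - 1)) ∂μ := by
        refine (lintegral_Ioi_lintegral_add_sqrt_rpow_mul_le μ (by linarith) (by fun_prop)
          x).trans_eq ?_
        rw [show (m : ℝ) + 2 - 2 = m by ring, show (2 : ℝ) - (m + 2) = -m by ring,
          mul_assoc (ENNReal.ofReal _) (ENNReal.ofReal M),
          ← lintegral_const_mul' (ENNReal.ofReal M) _ ENNReal.ofReal_ne_top]
        congr 1
        refine lintegral_congr fun y => ?_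
        rw [ENNReal.ofReal_mul hM]
        ring
    _ ≤ ENNReal.ofReal ((m + 2) / m * C₀) * ENNReal.ofReal M *
          (μ.toSphere univ * ENNReal.ofReal (c * (1 + ‖x‖) ^ (-α))) := by
        gcongr
        exact lintegral_norm_sub_rpow_mul_one_add_norm_rpow_le μ hE hα hαm x
    _ = _ := by
        conv_lhs => rw [← ENNReal.ofReal_toReal (measure_ne_top μ.toSphere univ)]
        rw [← ENNReal.ofReal_mul (by positivity), ← ENNReal.ofReal_mul (by positivity),
          ← ENNReal.ofReal_mul (by positivity)]
        congr 1
        ring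

end AddHaar

theorem stmt17 (α C₀ : ℝ) (hα : 0 < α) (hα2 : α < 2) (hC₀ : 0 < C₀) :
    ∃ C : ℝ, 0 < C ∧
      ∀ (M : ℝ) (G : ℝ → EuclideanSpace ℝ (Fin 3) → Fin 3 → Fin 3 → ℝ)
        (K : ℝ → EuclideanSpace ℝ (Fin 3) → ℝ),
        (∀ t y, ‖G t y‖ ≤ M * (1 + ‖y‖) ^ (-α - 1)) →
        (∀ s : ℝ, 0 < s → ∀ z, |K s z| ≤ C₀ * (‖z‖ + Real.sqrt s) ^ (-(4 : ℝ))) →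
        ∀ (t : ℝ) (x : EuclideanSpace ℝ (Fin 3)),
          ‖∫ s in Set.Ioi (0 : ℝ), ∫ y : EuclideanSpace ℝ (Fin 3), K s (x - y) • G (t - s) y‖
            ≤ C * M * (1 + ‖x‖) ^ (-α) := by
  have hE : finrank ℝ (EuclideanSpace ℝ (Fin 3)) = 2 + 1 := by simp
  have : Nontrivial (EuclideanSpace ℝ (Fin 3)) := nontrivial_of_finrank_eq_succ hE
  have hα2' : α < (2 : ℕ) := by exact_mod_cast hα2
  have hκ : 0 < ((volume : Measure (EuclideanSpace ℝ (Fin 3))).toSphere univ).toReal :=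
    ENNReal.toReal_pos (measure_univ_ne_zero.mpr (toSphere_ne_zero volume)) (measure_ne_top _ _)
  refine ⟨_, ?_, fun M G K hG hK t x => norm_integral_Ioi_integral_smul_le volume hE hα hα2'
    (fun s hs z => by convert hK s hs z using 3; norm_num) hG t x⟩
  have : (0 : ℝ) < (2 : ℕ) - α := by linarith
  positivity
end
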